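/- Let 0 < p ≤ 1, let X be a p-Banach space over 𝔽 = ℝ or ℂ, and let 𝒳 be a basis of X. Then 𝒳 is almost greedy if and only if there is C > 0 such that ‖f − P_A(f)‖ ≤ C·‖f − (min_{n∈A}|x_n^*(f)|)·𝟙_B‖ for all f ∈ X, all greedy sets A of f, and all B ⊂ ℕ with |B| = |A| and either A < B or B < A. -/

import Mathlib

open scoped BigOperators

noncomputable section

/-- A basis of a `p`-Banach space over `𝕜` (`𝕜 = ℝ` or `ℂ`), bundled with the `p`-norm
`N`, the basis vectors `e`, and the biorthogonal functionals `coord`. -/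
structure PBasis (𝕜 : Type*) [RCLike 𝕜] (X : Type*) [AddCommGroup X] [Module 𝕜 X]
    (p : ℝ) : Type _ where
  /-- the `p`-norm of the space -/
  N : X → ℝ
  N_nonneg : ∀ f : X, 0 ≤ N f
  N_eq_zero_iff : ∀ f : X, N f = 0 ↔ f = 0
  N_smul : ∀ (t : 𝕜) (f : X), N (t • f) = ‖t‖ * N f
  N_padd : ∀ f g : X, N (f + g) ^ p ≤ N f ^ p + N g ^ p
  /-- completeness with respect to the `p`-norm -/
  complete : ∀ u : ℕ → X,
      (∀ ε : ℝ, 0 < ε → ∃ n₀ : ℕ, ∀ m n : ℕ, n₀ ≤ m → n₀ ≤ n → N (u m - u n) < ε) →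
      ∃ f : X, ∀ ε : ℝ, 0 < ε → ∃ n₀ : ℕ, ∀ n : ℕ, n₀ ≤ n → N (u n - f) < ε
  /-- the basis vectors -/
  e : ℕ → X
  /-- the biorthogonal functionals -/
  coord : ℕ → X →ₗ[𝕜] 𝕜
  biorth : ∀ n m : ℕ, coord n (e m) = if n = m then (1 : 𝕜) else 0
  /-- the closed linear span of the basis vectors is the whole space -/
  dense_span : ∀ f : X, ∀ ε : ℝ, 0 < ε →
      ∃ g ∈ Submodule.span 𝕜 (Set.range e), N (f - g) < ε
  e_bdd : ∃ c : ℝ, ∀ n : ℕ, N (e n) ≤ c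
  coord_bdd : ∃ c : ℝ, ∀ (n : ℕ) (f : X), ‖coord n f‖ ≤ c * N f

namespace PBasis

variable {𝕜 : Type*} [RCLike 𝕜] {X : Type*} [AddCommGroup X] [Module 𝕜 X] {p : ℝ}

/-- The projection `P_A f = ∑_{n ∈ A} x_n^*(f) x_n`. -/
def proj (bs : PBasis 𝕜 X p) (A : Finset ℕ) (f : X) : X :=
  ∑ n ∈ A, bs.coord n f • bs.e n

/-- The support of `f`. -/
def supp (bs : PBasis 𝕜 X p) (f : X) : Set ℕ := {n | bs.coord n f ≠ 0}

/-- `A` is a greedy set of `f`: `min_{n ∈ A} |x_n^*(f)| ≥ max_{m ∉ A} |x_m^*(f)|`. -/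
def IsGreedySet (bs : PBasis 𝕜 X p) (f : X) (A : Finset ℕ) : Prop :=
  ∀ n ∈ A, ∀ m : ℕ, m ∉ A → ‖bs.coord m f‖ ≤ ‖bs.coord n f‖

/-- `𝟙_{ε,A} = ∑_{j ∈ A} ε_j x_j`. -/
def indSign (bs : PBasis 𝕜 X p) (ε : ℕ → 𝕜) (A : Finset ℕ) : X :=
  ∑ j ∈ A, ε j • bs.e j

/-- `𝟙_A = ∑_{j ∈ A} x_j`. -/
def ind (bs : PBasis 𝕜 X p) (A : Finset ℕ) : X := ∑ j ∈ A, bs.e j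

/-- `ε` is a sign on `A`. -/
def IsSign (ε : ℕ → 𝕜) (A : Finset ℕ) : Prop := ∀ j ∈ A, ‖ε j‖ = 1

/-- `min_{n ∈ A} |x_n^*(f)|`. -/
def minCoef (bs : PBasis 𝕜 X p) (f : X) (A : Finset ℕ) : ℝ :=
  sInf ((fun n => ‖bs.coord n f‖) '' (A : Set ℕ))

/-- `‖f − P_A(f)‖ ≤ C·σ_m(f)` for every greedy set `A` of cardinality `m`. -/
def IsGreedyWith (bs : PBasis 𝕜 X p) (C : ℝ) : Prop :=
  ∀ (f : X) (A B : Finset ℕ) (a : ℕ → 𝕜), bs.IsGreedySet f A → B.card ≤ A.card →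
    bs.N (f - bs.proj A f) ≤ C * bs.N (f - ∑ j ∈ B, a j • bs.e j)

/-- `‖f − P_A(f)‖ ≤ C·ρ_m(f)` for every greedy set `A` of cardinality `m`, where
`ρ_m(f) = inf {‖f − α 𝟙_{ε,B}‖ : |B| = m, ε sign}` and `α = min_{n ∈ A} |x_n^*(f)|`. -/
def IsRGPCCWith (bs : PBasis 𝕜 X p) (C : ℝ) : Prop :=
  ∀ (f : X) (A B : Finset ℕ) (ε : ℕ → 𝕜), bs.IsGreedySet f A → B.card = A.card →
    IsSign ε B →
    bs.N (f - bs.proj A f) ≤ C * bs.N (f - ((bs.minCoef f A : ℝ) : 𝕜) • bs.indSign ε B)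

/-- `‖f − P_A(f)‖ ≤ C·ϱ_m(f)` for every greedy set `A` of cardinality `m`, where
`ϱ_m(f) = inf {‖f − α 𝟙_B‖ : |B| = m}` and `α = min_{n ∈ A} |x_n^*(f)|`. -/
def IsURGPCCWith (bs : PBasis 𝕜 X p) (C : ℝ) : Prop :=
  ∀ (f : X) (A B : Finset ℕ), bs.IsGreedySet f A → B.card = A.card →
    bs.N (f - bs.proj A f) ≤ C * bs.N (f - ((bs.minCoef f A : ℝ) : 𝕜) • bs.ind B)

/-- `K`-unconditionality. -/
def IsUncondWith (bs : PBasis 𝕜 X p) (K : ℝ) : Prop :=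
  ∀ (A : Finset ℕ) (f : X), bs.N (bs.proj A f) ≤ K * bs.N f

/-- `C`-quasi-greediness. -/
def IsQuasiGreedyWith (bs : PBasis 𝕜 X p) (C : ℝ) : Prop :=
  ∀ (f : X) (A : Finset ℕ), bs.IsGreedySet f A → bs.N (f - bs.proj A f) ≤ C * bs.N f

/-- `C`-almost-greediness. -/
def IsAlmostGreedyWith (bs : PBasis 𝕜 X p) (C : ℝ) : Prop :=
  ∀ (f : X) (A B : Finset ℕ), bs.IsGreedySet f A → B.card ≤ A.card →
    bs.N (f - bs.proj A f) ≤ C * bs.N (f - bs.proj B f)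

/-- `D`-democracy. -/
def IsDemocraticWith (bs : PBasis 𝕜 X p) (D : ℝ) : Prop :=
  ∀ A B : Finset ℕ, A.card ≤ B.card → bs.N (bs.ind A) ≤ D * bs.N (bs.ind B)

/-- `D`-superdemocracy. -/
def IsSuperdemocraticWith (bs : PBasis 𝕜 X p) (D : ℝ) : Prop :=
  ∀ (A B : Finset ℕ) (ε η : ℕ → 𝕜), A.card ≤ B.card → IsSign ε A → IsSign η B →
    bs.N (bs.indSign ε A) ≤ D * bs.N (bs.indSign η B)

/-- `A < B`, i.e. every element of `A` is smaller than every element of `B`. -/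
def FinsetBefore (A B : Finset ℕ) : Prop := ∀ a ∈ A, ∀ b ∈ B, a < b

open scoped Classical in
/-- `sgn z = z/|z|` (with the convention `sgn 0 = 1`). -/
def sgn (z : 𝕜) : 𝕜 := if z = 0 then 1 else z / ((‖z‖ : ℝ) : 𝕜)

end PBasis

/-!
Work with `Q = N^p`, which is subadditive. Both conditions imply quasi-greediness and a
truncation bound `Q(α 𝟙_G) ≲ Q(g)`, where `α` is the level of a greedy set `A` of `g` and
`|G| ≤ |A|`: the level `α` is first carried into a block far out, where the coordinates of `g`
are negligible, and from there onto `G` by separated democracy and the suppression bound for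
indicator sums. For the separated condition quasi-greediness itself comes from a chain of such
far blocks. Conversely, by the binary-expansion estimate in `p`-Banach spaces, the truncation
bound controls every `∑_{m ∈ E} c_m x_m` with `|E| ≤ |A|` and `|c_m| ≤ α`; such sums are
the error terms `P_{D \ A} f` and `P_B (f - α 𝟙_B)` in passing between the two conditions.
-/

open Finset Filter Topology

lemma le_of_forall_pos_le_add_mul {a b c : ℝ} (h : ∀ δ > 0, a ≤ b + c * δ) : a ≤ b := by
  refine le_of_forall_pos_le_add fun ε hε => ?_
  have hc : 0 < |c| + 1 := by positivity
  calc a ≤ b + c * (ε / (|c| + 1)) := h _ (by positivity)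
    _ ≤ b + ε := by
      gcongr
      rw [mul_div_assoc']
      exact div_le_of_le_mul₀ hc.le hε.le (by nlinarith [le_abs_self c])

namespace PBasis

variable {𝕜 : Type*} [RCLike 𝕜] {X : Type*} [AddCommGroup X] [Module 𝕜 X] {p : ℝ}

section

variable (bs : PBasis 𝕜 X p)

def Q (f : X) : ℝ := bs.N f ^ p

section QuasiNorm

lemma N_neg (f : X) : bs.N (-f) = bs.N f := by
  simpa using bs.N_smul (-1) f

lemma Q_nonneg (f : X) : 0 ≤ bs.Q f := Real.rpow_nonneg (bs.N_nonneg f) p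

lemma Q_zero (hp : 0 < p) : bs.Q 0 = 0 := by
  simp [Q, (bs.N_eq_zero_iff 0).2 rfl, Real.zero_rpow hp.ne']

lemma Q_add_le (f g : X) : bs.Q (f + g) ≤ bs.Q f + bs.Q g := bs.N_padd f g

lemma Q_neg (f : X) : bs.Q (-f) = bs.Q f := by rw [Q, Q, N_neg]

lemma Q_sub_le (f g : X) : bs.Q (f - g) ≤ bs.Q f + bs.Q g := by
  simpa [sub_eq_add_neg, Q_neg] using bs.Q_add_le f (-g)

lemma Q_smul (t : 𝕜) (f : X) : bs.Q (t • f) = ‖t‖ ^ p * bs.Q f := by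
  rw [Q, Q, bs.N_smul, Real.mul_rpow (norm_nonneg t) (bs.N_nonneg f)]

lemma Q_ofReal_smul {a : ℝ} (ha : 0 ≤ a) (f : X) :
    bs.Q ((a : 𝕜) • f) = a ^ p * bs.Q f := by
  rw [Q_smul, RCLike.norm_ofReal, abs_of_nonneg ha]

lemma Q_sum_le (hp : 0 < p) {ι : Type*} (s : Finset ι) (v : ι → X) :
    bs.Q (∑ i ∈ s, v i) ≤ ∑ i ∈ s, bs.Q (v i) :=
  le_sum_of_subadditive bs.Q (bs.Q_zero hp).le bs.Q_add_le s v

lemma N_le_iff_Q_le (hp : 0 < p) {C : ℝ} (hC : 0 ≤ C) (x y : X) :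
    bs.N x ≤ C * bs.N y ↔ bs.Q x ≤ C ^ p * bs.Q y := by
  rw [Q, Q, ← Real.mul_rpow hC (bs.N_nonneg y)]
  exact (Real.rpow_le_rpow_iff (bs.N_nonneg x) (mul_nonneg hC (bs.N_nonneg y)) hp).symm

lemma N_le_of_Q_le (hp : 0 < p) {K : ℝ} (hK : 0 ≤ K) {x y : X}
    (h : bs.Q x ≤ K * bs.Q y) : bs.N x ≤ K ^ p⁻¹ * bs.N y := by
  rwa [bs.N_le_iff_Q_le hp (Real.rpow_nonneg hK _), Real.rpow_inv_rpow hK hp.ne']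

end QuasiNorm

section Coordinates

lemma coord_ind (n : ℕ) (B : Finset ℕ) :
    bs.coord n (bs.ind B) = if n ∈ B then 1 else 0 := by
  simp [ind, bs.biorth]

lemma coord_proj (n : ℕ) (A : Finset ℕ) (f : X) :
    bs.coord n (bs.proj A f) = if n ∈ A then bs.coord n f else 0 := by
  simp [proj, bs.biorth]

lemma proj_add (A : Finset ℕ) (f g : X) : bs.proj A (f + g) = bs.proj A f + bs.proj A g := by
  simp [proj, add_smul, sum_add_distrib]

lemma proj_sub (A : Finset ℕ) (f g : X) : bs.proj A (f - g) = bs.proj A f - bs.proj A g := by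
  simp [proj, sub_smul, sum_sub_distrib]

lemma proj_smul (A : Finset ℕ) (t : 𝕜) (f : X) : bs.proj A (t • f) = t • bs.proj A f := by
  simp [proj, smul_sum, smul_smul]

@[simp] lemma proj_empty (f : X) : bs.proj ∅ f = 0 := by simp [proj]

@[simp] lemma ind_empty : bs.ind ∅ = 0 := by simp [ind]

lemma proj_proj (T W : Finset ℕ) (f : X) : bs.proj T (bs.proj W f) = bs.proj (T ∩ W) f := by
  rw [proj]
  simp only [coord_proj, ite_smul, zero_smul, sum_ite_mem]
  rfl

lemma proj_ind (T W : Finset ℕ) : bs.proj T (bs.ind W) = bs.ind (T ∩ W) := by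
  rw [proj]
  simp only [coord_ind, ite_smul, one_smul, zero_smul, sum_ite_mem]
  rfl

lemma proj_union {A B : Finset ℕ} (h : Disjoint A B) (f : X) :
    bs.proj (A ∪ B) f = bs.proj A f + bs.proj B f :=
  sum_union h

lemma ind_union {A B : Finset ℕ} (h : Disjoint A B) : bs.ind (A ∪ B) = bs.ind A + bs.ind B :=
  sum_union h

lemma coord_sub_proj (n : ℕ) (D : Finset ℕ) (f : X) :
    bs.coord n (f - bs.proj D f) = if n ∈ D then 0 else bs.coord n f := by
  rw [map_sub, coord_proj]
  split_ifs <;> simp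

lemma sub_proj_eq_sub_proj_sub_proj_add_proj (f : X) (A D : Finset ℕ) :
    f - bs.proj A f
      = (f - bs.proj D f) - bs.proj (A \ D) (f - bs.proj D f) + bs.proj (D \ A) f := by
  have hA : bs.proj A f = bs.proj (A \ D) f + bs.proj (A ∩ D) f := by
    rw [← proj_union _ (disjoint_sdiff_inter A D), sdiff_union_inter]
  have hD : bs.proj D f = bs.proj (D \ A) f + bs.proj (A ∩ D) f := by
    rw [inter_comm, ← proj_union _ (disjoint_sdiff_inter D A),
      sdiff_union_inter]
  rw [proj_sub, proj_proj, sdiff_inter_self, proj_empty, sub_zero, hA, hD]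
  abel

end Coordinates

section MinCoef

lemma minCoef_nonneg (f : X) (A : Finset ℕ) : 0 ≤ bs.minCoef f A :=
  Real.sInf_nonneg (by rintro _ ⟨n, -, rfl⟩; exact norm_nonneg _)

lemma minCoef_le {f : X} {A : Finset ℕ} {n : ℕ} (hn : n ∈ A) :
    bs.minCoef f A ≤ ‖bs.coord n f‖ :=
  csInf_le ⟨0, by rintro _ ⟨m, -, rfl⟩; exact norm_nonneg _⟩ ⟨n, hn, rfl⟩

lemma le_minCoef {f : X} {A : Finset ℕ} (hA : A.Nonempty) {c : ℝ}
    (h : ∀ n ∈ A, c ≤ ‖bs.coord n f‖) : c ≤ bs.minCoef f A :=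
  le_csInf (let ⟨n, hn⟩ := hA; ⟨_, n, hn, rfl⟩) (by rintro _ ⟨n, hn, rfl⟩; exact h n hn)

lemma exists_norm_coord_eq_minCoef {f : X} {A : Finset ℕ} (hA : A.Nonempty) :
    ∃ n ∈ A, ‖bs.coord n f‖ = bs.minCoef f A := by
  obtain ⟨n, hn, hmin⟩ := A.exists_min_image (fun n => ‖bs.coord n f‖) hA
  exact ⟨n, hn, le_antisymm (bs.le_minCoef hA hmin) (bs.minCoef_le hn)⟩

lemma minCoef_eq_of_forall_le {f : X} {A : Finset ℕ} {θ : ℝ}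
    (hle : ∀ n ∈ A, θ ≤ ‖bs.coord n f‖) (hθ : ∃ n ∈ A, ‖bs.coord n f‖ = θ) :
    bs.minCoef f A = θ := by
  obtain ⟨n, hn, rfl⟩ := hθ
  exact le_antisymm (bs.minCoef_le hn) (bs.le_minCoef ⟨n, hn⟩ hle)

variable {bs} in
lemma IsGreedySet.norm_coord_le_minCoef {f : X} {A : Finset ℕ} (hA : bs.IsGreedySet f A)
    (hne : A.Nonempty) {m : ℕ} (hm : m ∉ A) : ‖bs.coord m f‖ ≤ bs.minCoef f A :=
  bs.le_minCoef hne fun n hn => hA n hn m hm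

variable {bs} in
lemma IsGreedySet.sub_proj {f : X} {A : Finset ℕ} (hA : bs.IsGreedySet f A) (D : Finset ℕ) :
    bs.IsGreedySet (f - bs.proj D f) (A \ D) := by
  intro n hn m hm
  rw [Finset.mem_sdiff] at hn
  rw [coord_sub_proj, coord_sub_proj, if_neg hn.2]
  split_ifs with hmD
  · simp
  · exact hA n hn.1 m fun hmA => hm (Finset.mem_sdiff.2 ⟨hmA, hmD⟩)

end MinCoef

lemma FinsetBefore.disjoint {A B : Finset ℕ} (h : FinsetBefore A B) : Disjoint A B :=
  disjoint_left.2 fun n hA hB => (h n hA n hB).false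

lemma finsetBefore_Ico {A : Finset ℕ} {M K : ℕ} (h : ∀ a ∈ A, a < M) :
    FinsetBefore A (Ico M K) :=
  fun a ha _ hb => (h a ha).trans_le (mem_Ico.1 hb).1

lemma finsetBefore_Ico_Ico {a b c d : ℕ} (h : b ≤ c) : FinsetBefore (Ico a b) (Ico c d) :=
  finsetBefore_Ico fun _ hx => (mem_Ico.1 hx).2.trans_le h

lemma FinsetBefore.union_left {A B S : Finset ℕ} (hA : FinsetBefore A S)
    (hB : FinsetBefore B S) : FinsetBefore (A ∪ B) S := fun a ha =>
  (mem_union.1 ha).elim (hA a) (hB a)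

section Tail

lemma eventually_coord_eq_zero_of_mem_span {h : X}
    (hh : h ∈ Submodule.span 𝕜 (Set.range bs.e)) : ∀ᶠ n in atTop, bs.coord n h = 0 := by
  induction hh using Submodule.span_induction with
  | mem x hx =>
    obtain ⟨m, rfl⟩ := hx
    filter_upwards [eventually_gt_atTop m] with n hn
    simp [bs.biorth, hn.ne']
  | zero => simp
  | add x y _ _ hx hy => filter_upwards [hx, hy] with n h1 h2; simp [h1, h2]
  | smul a x _ hx => filter_upwards [hx] with n h; simp [h]

lemma tendsto_coord (g : X) : Tendsto (fun n => bs.coord n g) atTop (𝓝 0) := by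
  obtain ⟨c, hc⟩ := bs.coord_bdd
  have hc' : 0 < max c 0 + 1 := by positivity
  rw [Metric.tendsto_atTop]
  intro ε hε
  obtain ⟨h, hh, hgh⟩ := bs.dense_span g (ε / (max c 0 + 1)) (by positivity)
  obtain ⟨N, hN⟩ := eventually_atTop.1 (bs.eventually_coord_eq_zero_of_mem_span hh)
  refine ⟨N, fun n hn => ?_⟩
  rw [dist_zero_right, ← sub_zero (bs.coord n g), ← hN n hn, ← map_sub]
  calc ‖bs.coord n (g - h)‖ ≤ c * bs.N (g - h) := hc n _
    _ ≤ (max c 0 + 1) * bs.N (g - h) := by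
      gcongr
      · exact bs.N_nonneg _
      · linarith [le_max_left c 0]
    _ < ε := by rwa [← lt_div_iff₀' hc']

lemma tendsto_Q_coord_smul_e (hp : 0 < p) (g : X) :
    Tendsto (fun n => bs.Q (bs.coord n g • bs.e n)) atTop (𝓝 0) := by
  obtain ⟨c, hc⟩ := bs.e_bdd
  have hQe : ∀ n, bs.Q (bs.e n) ≤ c ^ p := fun n =>
    Real.rpow_le_rpow (bs.N_nonneg _) (hc n) hp.le
  have hlim : Tendsto (fun n => ‖bs.coord n g‖ ^ p * c ^ p) atTop (𝓝 0) := by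
    simpa [Real.zero_rpow hp.ne'] using
      ((bs.tendsto_coord g).norm.rpow_const (Or.inr hp.le)).mul_const (c ^ p)
  refine squeeze_zero (fun n => bs.Q_nonneg _) (fun n => ?_) hlim
  rw [Q_smul]
  exact mul_le_mul_of_nonneg_left (hQe n) (Real.rpow_nonneg (norm_nonneg _) p)

lemma exists_Q_proj_le (hp : 0 < p) (g : X) (s : Finset ℕ) (K : ℕ) {δ : ℝ} (hδ : 0 < δ) :
    ∃ N, (∀ a ∈ s, a < N) ∧
      ∀ F : Finset ℕ, F.card ≤ K → (∀ n ∈ F, N ≤ n) →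
        bs.Q (bs.proj F g) ≤ δ := by
  have hK : (0 : ℝ) < K + 1 := by positivity
  obtain ⟨N, hN⟩ := eventually_atTop.1
    ((bs.tendsto_Q_coord_smul_e hp g).eventually (ge_mem_nhds (div_pos hδ hK)))
  obtain ⟨n, hn⟩ := s.exists_nat_subset_range
  refine ⟨max N n, fun a ha => (mem_range.1 (hn ha)).trans_le (le_max_right _ _),
    fun F hF hFN => ?_⟩
  calc bs.Q (bs.proj F g) ≤ ∑ n ∈ F, bs.Q (bs.coord n g • bs.e n) := bs.Q_sum_le hp _ _
    _ ≤ ∑ _n ∈ F, δ / (K + 1) :=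
      sum_le_sum fun n hn => hN n ((le_max_left _ _).trans (hFN n hn))
    _ ≤ δ := by
      rw [sum_const, nsmul_eq_mul, mul_div_assoc', div_le_iff₀ hK]
      have : (F.card : ℝ) ≤ K := by exact_mod_cast hF
      nlinarith

end Tail

section BinaryExpansion

def binaryConst (p : ℝ) : ℝ := (1 / 2 : ℝ) ^ p / (1 - (1 / 2 : ℝ) ^ p)

lemma binaryConst_nonneg (hp : 0 < p) : 0 ≤ binaryConst p :=
  div_nonneg (by positivity)
    (sub_nonneg.2 (Real.rpow_le_one (by norm_num) (by norm_num) hp.le))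

variable {bs}

/- Splitting each `t i ∈ [0, 1]` as `½ 𝟙[t i ≥ ½] + ½ (2 t i - 𝟙[t i ≥ ½])` shows
that the supremum `M` of the left-hand side over all such `t` satisfies
`M ≤ 2^{-p} (R + M)`. -/
lemma Q_sum_ofReal_smul_le (hp : 0 < p) {E : Finset ℕ} {x : ℕ → X} {R : ℝ}
    (hR : ∀ G ⊆ E, bs.Q (∑ i ∈ G, x i) ≤ R) {t : ℕ → ℝ}
    (ht : ∀ i ∈ E, t i ∈ Set.Icc (0 : ℝ) 1) :
    bs.Q (∑ i ∈ E, (t i : 𝕜) • x i) ≤ binaryConst p * R := by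
  set h : ℝ := (1 / 2 : ℝ) ^ p
  have hh0 : 0 ≤ h := by positivity
  have hh1 : h < 1 := Real.rpow_lt_one (by norm_num) (by norm_num) hp
  set S := (fun s : ℕ → ℝ => bs.Q (∑ i ∈ E, (s i : 𝕜) • x i)) ''
    {s | ∀ i ∈ E, s i ∈ Set.Icc (0 : ℝ) 1}
  have hbdd : BddAbove S := by
    refine ⟨∑ i ∈ E, bs.Q (x i), ?_⟩
    rintro _ ⟨s, hs, rfl⟩
    refine (bs.Q_sum_le hp _ _).trans (sum_le_sum fun i hi => ?_)
    rw [bs.Q_ofReal_smul (hs i hi).1]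
    exact mul_le_of_le_one_left (bs.Q_nonneg _)
      (Real.rpow_le_one (hs i hi).1 (hs i hi).2 hp.le)
  have hhalf : ∀ q ∈ S, q ≤ h * R + h * sSup S := by
    rintro _ ⟨s, hs, rfl⟩
    set G := E.filter fun i => 1 / 2 ≤ s i
    set ind : ℕ → ℝ := fun i => if 1 / 2 ≤ s i then 1 else 0
    have hsplit : ∑ i ∈ E, (s i : 𝕜) • x i = ((1 / 2 : ℝ) : 𝕜) • ∑ i ∈ G, x i
        + ((1 / 2 : ℝ) : 𝕜) • ∑ i ∈ E, ((2 * s i - ind i : ℝ) : 𝕜) • x i := by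
      rw [sum_filter, smul_sum, smul_sum, ← sum_add_distrib]
      refine sum_congr rfl fun i _ => ?_
      by_cases hi : 1 / 2 ≤ s i <;>
        simp only [ind, hi, if_true, if_false, smul_zero, zero_add, smul_smul, ← add_smul] <;>
        · congr 1; push_cast; ring
    have hmem : bs.Q (∑ i ∈ E, ((2 * s i - ind i : ℝ) : 𝕜) • x i) ∈ S := by
      refine ⟨_, fun i hi => ?_, rfl⟩
      have := hs i hi
      simp only [ind, Set.mem_Icc] at this ⊢
      split_ifs <;> constructor <;> linarith
    calc bs.Q (∑ i ∈ E, (s i : 𝕜) • x i)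
        ≤ h * bs.Q (∑ i ∈ G, x i)
          + h * bs.Q (∑ i ∈ E, ((2 * s i - ind i : ℝ) : 𝕜) • x i) := by
          rw [hsplit, ← bs.Q_ofReal_smul (by norm_num), ← bs.Q_ofReal_smul (by norm_num)]
          exact bs.Q_add_le _ _
      _ ≤ h * R + h * sSup S := by
          gcongr
          · exact hR G (filter_subset _ _)
          · exact le_csSup hbdd hmem
  have hsup : sSup S ≤ h * R + h * sSup S := csSup_le ⟨_, t, ht, rfl⟩ hhalf
  have hsup' : sSup S ≤ binaryConst p * R := by
    rw [binaryConst, div_mul_eq_mul_div, le_div_iff₀ (by linarith)]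
    linarith
  exact (le_csSup hbdd ⟨t, ht, rfl⟩).trans hsup'

lemma Q_sum_smul_le (hp : 0 < p) {E : Finset ℕ} {x : ℕ → X} {R : ℝ}
    (hR : ∀ G ⊆ E, bs.Q (∑ i ∈ G, x i) ≤ R) {c : ℕ → 𝕜}
    (hc : ∀ i ∈ E, ‖c i‖ ≤ 1) :
    bs.Q (∑ i ∈ E, c i • x i) ≤ 4 * binaryConst p * R := by
  have hreal : ∀ u : ℕ → ℝ, (∀ i ∈ E, |u i| ≤ 1) →
      bs.Q (∑ i ∈ E, (u i : 𝕜) • x i) ≤ 2 * binaryConst p * R := by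
    intro u hu
    have hsplit : ∑ i ∈ E, (u i : 𝕜) • x i
        = ∑ i ∈ E, ((max (u i) 0 : ℝ) : 𝕜) • x i
          - ∑ i ∈ E, ((max (-u i) 0 : ℝ) : 𝕜) • x i := by
      rw [← sum_sub_distrib]
      refine sum_congr rfl fun i _ => ?_
      rw [← sub_smul, ← RCLike.ofReal_sub, max_zero_sub_max_neg_zero_eq_self]
    have hpos := Q_sum_ofReal_smul_le hp hR (t := fun i => max (u i) 0)
      fun i hi => ⟨le_max_right _ _, max_le (abs_le.1 (hu i hi)).2 zero_le_one⟩
    have hneg := Q_sum_ofReal_smul_le hp hR (t := fun i => max (-u i) 0)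
      fun i hi => ⟨le_max_right _ _, max_le (by linarith [(abs_le.1 (hu i hi)).1]) zero_le_one⟩
    rw [hsplit]
    linarith [bs.Q_sub_le (∑ i ∈ E, ((max (u i) 0 : ℝ) : 𝕜) • x i)
      (∑ i ∈ E, ((max (-u i) 0 : ℝ) : 𝕜) • x i)]
  have hsplit : ∑ i ∈ E, c i • x i = ∑ i ∈ E, (RCLike.re (c i) : 𝕜) • x i
      + (RCLike.I : 𝕜) • ∑ i ∈ E, (RCLike.im (c i) : 𝕜) • x i := by
    rw [smul_sum, ← sum_add_distrib]
    refine sum_congr rfl fun i _ => ?_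
    rw [smul_smul, ← add_smul, mul_comm, RCLike.re_add_im]
  have hI : ‖(RCLike.I : 𝕜)‖ ^ p ≤ 1 :=
    Real.rpow_le_one (norm_nonneg _) (by rw [RCLike.norm_I]; split_ifs <;> norm_num) hp.le
  have hre := hreal (fun i => RCLike.re (c i))
    fun i hi => (RCLike.abs_re_le_norm _).trans (hc i hi)
  have him := hreal (fun i => RCLike.im (c i))
    fun i hi => (RCLike.abs_im_le_norm _).trans (hc i hi)
  rw [hsplit]
  refine (bs.Q_add_le _ _).trans ?_
  rw [bs.Q_smul]
  nlinarith [bs.Q_nonneg (∑ i ∈ E, (RCLike.im (c i) : 𝕜) • x i)]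

end BinaryExpansion

def IsQuasiGreedyQ (K : ℝ) : Prop :=
  ∀ (f : X) (A : Finset ℕ), bs.IsGreedySet f A → bs.Q (f - bs.proj A f) ≤ K * bs.Q f

def IsSeparatedDemocraticQ (D : ℝ) : Prop :=
  ∀ G F : Finset ℕ, FinsetBefore G F → F.card = G.card →
    bs.Q (bs.ind G) ≤ D * bs.Q (bs.ind F)

def IsTruncationBoundedQ (K : ℝ) : Prop :=
  ∀ (g : X) (A G : Finset ℕ), bs.IsGreedySet g A → G.card ≤ A.card →
    bs.Q ((bs.minCoef g A : 𝕜) • bs.ind G) ≤ K * bs.Q g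

def IsSeparatedURGPCCWith (C : ℝ) : Prop :=
  ∀ (f : X) (A B : Finset ℕ), bs.IsGreedySet f A → B.card = A.card →
    (FinsetBefore A B ∨ FinsetBefore B A) →
    bs.N (f - bs.proj A f) ≤ C * bs.N (f - ((bs.minCoef f A : ℝ) : 𝕜) • bs.ind B)

variable {bs}

lemma IsQuasiGreedyQ.Q_ind_le_of_subset {K : ℝ} (hqg : bs.IsQuasiGreedyQ K)
    {G E : Finset ℕ} (hGE : G ⊆ E) : bs.Q (bs.ind G) ≤ K * bs.Q (bs.ind E) := by
  have hgreedy : bs.IsGreedySet (bs.ind E) (E \ G) := by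
    intro n hn m _
    rw [coord_ind, coord_ind, if_pos (Finset.mem_sdiff.1 hn).1]
    split_ifs <;> simp
  have h := hqg _ _ hgreedy
  have hres : bs.ind E - bs.ind (E \ G) = bs.ind G := by
    rw [sub_eq_iff_eq_add', ← ind_union _ sdiff_disjoint, sdiff_union_of_subset hGE]
  rwa [proj_ind, inter_eq_left.2 sdiff_subset, hres] at h

/-- Separated democracy and suppression move `G` into a block `b` far out, where the
projection of `g` onto `b` is negligible. -/
lemma IsTruncationBoundedQ.of_far (hp : 0 < p) {K₁ D K K' : ℝ} (hK₁ : 0 ≤ K₁)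
    (hD : 0 ≤ D) (hK' : 0 ≤ K') (hqg : bs.IsQuasiGreedyQ K₁)
    (hsd : bs.IsSeparatedDemocraticQ D)
    (hfar : ∀ (g : X) (A b : Finset ℕ), bs.IsGreedySet g A → FinsetBefore A b →
      b.card = A.card →
      bs.Q ((bs.minCoef g A : 𝕜) • bs.ind b) ≤ K * bs.Q g + K' * bs.Q (bs.proj b g)) :
    bs.IsTruncationBoundedQ (D * K₁ * K) := by
  intro g A G hA hG
  refine le_of_forall_pos_le_add_mul (c := D * K₁ * K') fun δ hδ => ?_
  obtain ⟨M, hM, hN⟩ := bs.exists_Q_proj_le hp g (A ∪ G) A.card hδ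
  set b := Ico M (M + A.card)
  have hbcard : b.card = A.card := by simp [b]
  have hbefore : ∀ s ⊆ A ∪ G, FinsetBefore s b := fun s hs =>
    finsetBefore_Ico fun a ha => hM a (hs ha)
  obtain ⟨F, hFb, hFcard⟩ := exists_subset_card_eq (hG.trans hbcard.ge)
  have hGF : FinsetBefore G F := fun a ha c hc =>
    hbefore G subset_union_right a ha c (hFb hc)
  have hjunk : bs.Q (bs.proj b g) ≤ δ := hN b hbcard.le fun m hm => (mem_Ico.1 hm).1
  have hα := bs.minCoef_nonneg g A
  calc bs.Q ((bs.minCoef g A : 𝕜) • bs.ind G)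
      = bs.minCoef g A ^ p * bs.Q (bs.ind G) := bs.Q_ofReal_smul hα _
    _ ≤ bs.minCoef g A ^ p * (D * (K₁ * bs.Q (bs.ind b))) := by
      gcongr
      exact (hsd G F hGF hFcard).trans (by gcongr; exact hqg.Q_ind_le_of_subset hFb)
    _ = D * K₁ * bs.Q ((bs.minCoef g A : 𝕜) • bs.ind b) := by
      rw [bs.Q_ofReal_smul hα]; ring
    _ ≤ D * K₁ * (K * bs.Q g + K' * bs.Q (bs.proj b g)) := by
      gcongr
      exact hfar g A b hA (hbefore A subset_union_left) hbcard
    _ ≤ D * K₁ * K * bs.Q g + D * K₁ * K' * δ := by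
      nlinarith [mul_nonneg (mul_nonneg hD hK₁) hK']

lemma IsTruncationBoundedQ.Q_sum_le (hp : 0 < p) {K : ℝ} (ht : bs.IsTruncationBoundedQ K)
    {g : X} {A E : Finset ℕ} (hA : bs.IsGreedySet g A) (hE : E.card ≤ A.card) {c : ℕ → 𝕜}
    (hc : ∀ m ∈ E, ‖c m‖ ≤ bs.minCoef g A) :
    bs.Q (∑ m ∈ E, c m • bs.e m) ≤ 4 * binaryConst p * K * bs.Q g := by
  set β := bs.minCoef g A
  have hβ : 0 ≤ β := bs.minCoef_nonneg g A
  have hexp :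
      ∑ m ∈ E, c m • bs.e m = ∑ m ∈ E, (c m / β) • ((β : 𝕜) • bs.e m) := by
    refine sum_congr rfl fun m hm => ?_
    rw [smul_smul, div_mul_cancel_of_imp]
    intro h0
    rw [RCLike.ofReal_eq_zero] at h0
    simpa [h0] using hc m hm
  have hR : ∀ G ⊆ E, bs.Q (∑ m ∈ G, (β : 𝕜) • bs.e m) ≤ K * bs.Q g := fun G hG => by
    rw [← smul_sum]
    exact ht g A G hA ((card_le_card hG).trans hE)
  have hc1 : ∀ m ∈ E, ‖c m / β‖ ≤ 1 := fun m hm => by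
    rw [norm_div, RCLike.norm_ofReal, abs_of_nonneg hβ]
    exact div_le_one_of_le₀ (hc m hm) hβ
  rw [hexp, mul_assoc _ K]
  exact Q_sum_smul_le hp hR hc1

/-- `f - P_A f = (g - P_{A \ D} g) + P_{D \ A} f` with `g = f - P_D f`, and the
coefficients of `P_{D \ A} f` lie below the level of the greedy set `A \ D` of `g`. -/
lemma IsQuasiGreedyQ.isAlmostGreedyWith (hp : 0 < p) {K₁ K₂ : ℝ} (hK₁ : 0 ≤ K₁)
    (hK₂ : 0 ≤ K₂) (hqg : bs.IsQuasiGreedyQ K₁) (ht : bs.IsTruncationBoundedQ K₂) :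
    bs.IsAlmostGreedyWith ((K₁ + 4 * binaryConst p * K₂) ^ p⁻¹) := by
  intro f A D hA hDA
  have hbin := binaryConst_nonneg hp
  refine bs.N_le_of_Q_le hp (by positivity) ?_
  set g := f - bs.proj D f
  have hgA := hA.sub_proj D
  have hcard : (D \ A).card ≤ (A \ D).card := by
    have h1 := card_sdiff_add_card_inter D A
    have h2 := card_sdiff_add_card_inter A D
    rw [inter_comm] at h2
    omega
  have hcoef : ∀ m ∈ D \ A, ‖bs.coord m f‖ ≤ bs.minCoef g (A \ D) := by
    intro m hm
    have hne : (A \ D).Nonempty :=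
      card_pos.1 ((card_pos.2 ⟨m, hm⟩).trans_le hcard)
    refine bs.le_minCoef hne fun n hn => ?_
    rw [coord_sub_proj, if_neg (Finset.mem_sdiff.1 hn).2]
    exact hA n (Finset.mem_sdiff.1 hn).1 m (Finset.mem_sdiff.1 hm).2
  have hproj := ht.Q_sum_le hp hgA hcard hcoef
  rw [bs.sub_proj_eq_sub_proj_sub_proj_add_proj f A D]
  calc _ ≤ bs.Q (g - bs.proj (A \ D) g) + bs.Q (bs.proj (D \ A) f) := bs.Q_add_le _ _
    _ ≤ K₁ * bs.Q g + 4 * binaryConst p * K₂ * bs.Q g := add_le_add (hqg g _ hgA) hproj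
    _ = _ := by ring

end

variable {bs : PBasis 𝕜 X p}

section AlmostGreedy

variable {C : ℝ} (hp : 0 < p) (hC : 0 ≤ C) (hag : bs.IsAlmostGreedyWith C)
include hp hC hag

lemma IsAlmostGreedyWith.Q_le {f : X} {A B : Finset ℕ} (hA : bs.IsGreedySet f A)
    (hBA : B.card ≤ A.card) : bs.Q (f - bs.proj A f) ≤ C ^ p * bs.Q (f - bs.proj B f) :=
  (bs.N_le_iff_Q_le hp hC _ _).1 (hag f A B hA hBA)

lemma IsAlmostGreedyWith.isQuasiGreedyQ : bs.IsQuasiGreedyQ (C ^ p) := fun f A hA => by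
  simpa using hag.Q_le hp hC hA (B := ∅) (by simp)

lemma IsAlmostGreedyWith.isSeparatedDemocraticQ : bs.IsSeparatedDemocraticQ (C ^ p) := by
  intro G F hGF hcard
  have hgreedy : bs.IsGreedySet (bs.ind (G ∪ F)) F := by
    intro n hn m _
    rw [coord_ind, coord_ind, if_pos (mem_union_right _ hn)]
    split_ifs <;> simp
  have h := hag.Q_le hp hC hgreedy hcard.ge
  rwa [proj_ind, proj_ind, inter_eq_left.2 subset_union_right,
    inter_eq_left.2 subset_union_left, ind_union _ hGF.disjoint,
    add_sub_cancel_right, add_sub_cancel_left] at h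

/-- Replacing the coordinates of `g` on `b` by the level `α` of `A` keeps `A` greedy, so
almost greediness compares removing `A` with removing `b`. -/
lemma IsAlmostGreedyWith.Q_minCoef_smul_ind_le {g : X} {A b : Finset ℕ}
    (hA : bs.IsGreedySet g A) (hbA : Disjoint b A) (hcard : b.card ≤ A.card) :
    bs.Q ((bs.minCoef g A : 𝕜) • bs.ind b)
      ≤ 2 * C ^ p * bs.Q g + (C ^ p + 1) * bs.Q (bs.proj b g) := by
  set α := bs.minCoef g A
  have hα : 0 ≤ α := bs.minCoef_nonneg g A
  set u := g - bs.proj b g + (α : 𝕜) • bs.ind b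
  have hcu : ∀ n, bs.coord n u = if n ∈ b then (α : 𝕜) else bs.coord n g := by
    intro n
    simp only [u, map_add, map_smul, coord_sub_proj, coord_ind, smul_eq_mul]
    split_ifs <;> simp
  have hgreedy : bs.IsGreedySet u A := by
    intro n hn m hm
    rw [hcu, hcu, if_neg (disjoint_right.1 hbA hn)]
    split_ifs
    · rw [RCLike.norm_ofReal, abs_of_nonneg hα]
      exact bs.minCoef_le hn
    · exact hA n hn m hm
  have hPA : bs.proj A u = bs.proj A g := by
    simp [u, proj_add, proj_sub, proj_smul, proj_proj, proj_ind,
      disjoint_iff_inter_eq_empty.1 hbA.symm]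
  have hPb : bs.proj b u = (α : 𝕜) • bs.ind b := by
    simp [u, proj_add, proj_sub, proj_smul, proj_proj, proj_ind]
  have key := hag.Q_le hp hC hgreedy hcard
  rw [hPb, add_sub_cancel_right] at key
  have hsplit : (α : 𝕜) • bs.ind b
      = (u - bs.proj A u) - (g - bs.proj A g) + bs.proj b g := by
    rw [hPA]; simp only [u]; abel
  have hqg := hag.isQuasiGreedyQ hp hC g A hA
  have hsub := bs.Q_sub_le g (bs.proj b g)
  have hCp : 0 ≤ C ^ p := Real.rpow_nonneg hC p
  rw [hsplit]
  refine (bs.Q_add_le _ _).trans ?_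
  nlinarith [bs.Q_sub_le (u - bs.proj A u) (g - bs.proj A g)]

lemma IsAlmostGreedyWith.isTruncationBoundedQ :
    bs.IsTruncationBoundedQ (C ^ p * C ^ p * (2 * C ^ p)) :=
  have hCp : 0 ≤ C ^ p := Real.rpow_nonneg hC p
  IsTruncationBoundedQ.of_far hp hCp hCp (by positivity) (hag.isQuasiGreedyQ hp hC)
    (hag.isSeparatedDemocraticQ hp hC) fun _ _ _ hA hAb hcard =>
      hag.Q_minCoef_smul_ind_le hp hC hA hAb.disjoint.symm hcard.le

end AlmostGreedy

/-- The coefficients of `P_B f - α 𝟙_B` lie below the level `α` of the greedy set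
`{n ∈ A ∪ B : α ≤ |x_n^*(g)|}` of `g = f - α 𝟙_B`, which contains `A`. -/
lemma IsTruncationBoundedQ.Q_proj_sub_minCoef_smul_ind_le (hp : 0 < p) {K : ℝ}
    (ht : bs.IsTruncationBoundedQ K) {f : X} {A B : Finset ℕ} (hA : bs.IsGreedySet f A)
    (hdisj : Disjoint A B) (hcard : B.card = A.card) :
    bs.Q (bs.proj B f - (bs.minCoef f A : 𝕜) • bs.ind B)
      ≤ 8 * binaryConst p * K * bs.Q (f - (bs.minCoef f A : 𝕜) • bs.ind B) := by
  set α := bs.minCoef f A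
  have hα : 0 ≤ α := bs.minCoef_nonneg f A
  set g := f - (α : 𝕜) • bs.ind B
  have hcoord : ∀ n ∉ B, bs.coord n g = bs.coord n f := fun n hn => by
    simp [g, coord_ind, hn]
  have hAne : ∀ n ∈ A ∪ B, A.Nonempty := fun n hn =>
    (mem_union.1 hn).elim (fun h => ⟨n, h⟩)
      fun h => card_pos.1 (hcard ▸ card_pos.2 ⟨n, h⟩)
  set Λ := (A ∪ B).filter fun n => α ≤ ‖bs.coord n g‖
  have hΛ : bs.IsGreedySet g Λ := by
    intro n hn m hm
    rw [mem_filter] at hn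
    refine le_trans ?_ hn.2
    by_cases hmAB : m ∈ A ∪ B
    · exact (not_le.1 fun h => hm (mem_filter.2 ⟨hmAB, h⟩)).le
    · rw [mem_union, not_or] at hmAB
      rw [hcoord m hmAB.2]
      exact hA.norm_coord_le_minCoef (hAne n hn.1) hmAB.1
  have hAΛ : A ⊆ Λ := fun n hn => mem_filter.2 ⟨mem_union_left _ hn, by
    rw [hcoord n (disjoint_left.1 hdisj hn)]; exact bs.minCoef_le hn⟩
  have hBΛ : B.card ≤ Λ.card := hcard ▸ card_le_card hAΛ
  have hαΛ : ∀ m ∈ B, α ≤ bs.minCoef g Λ := fun m hm =>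
    bs.le_minCoef ((hAne m (mem_union_right _ hm)).mono hAΛ) fun n hn => (mem_filter.1 hn).2
  have hPBf : bs.Q (bs.proj B f) ≤ 4 * binaryConst p * K * bs.Q g :=
    ht.Q_sum_le hp hΛ hBΛ fun m hm =>
      (hA.norm_coord_le_minCoef (hAne m (mem_union_right _ hm)) (disjoint_right.1 hdisj hm)).trans
        (hαΛ m hm)
  have hind : bs.Q ((α : 𝕜) • bs.ind B) ≤ 4 * binaryConst p * K * bs.Q g := by
    rw [ind, smul_sum]
    refine ht.Q_sum_le hp hΛ hBΛ fun m hm => ?_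
    rw [RCLike.norm_ofReal, abs_of_nonneg hα]
    exact hαΛ m hm
  linarith [bs.Q_sub_le (bs.proj B f) ((α : 𝕜) • bs.ind B)]

/-- With `g = f - α 𝟙_B`, almost greediness bounds `f - P_A f` by `g - P_B g`. -/
lemma IsAlmostGreedyWith.exists_isSeparatedURGPCCWith (hp : 0 < p) {C : ℝ} (hC : 0 < C)
    (hag : bs.IsAlmostGreedyWith C) : ∃ C' > 0, bs.IsSeparatedURGPCCWith C' := by
  set κ := C ^ p
  set K := C ^ p * C ^ p * (2 * C ^ p)
  have hκ : 0 < κ := Real.rpow_pos_of_pos hC p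
  have hbin := binaryConst_nonneg hp
  have hK : 0 < κ * (1 + 8 * binaryConst p * K) := by positivity
  refine ⟨(κ * (1 + 8 * binaryConst p * K)) ^ p⁻¹, by positivity, ?_⟩
  intro f A B hA hcard hsep
  refine bs.N_le_of_Q_le hp hK.le ?_
  have hdisj : Disjoint A B := hsep.elim FinsetBefore.disjoint fun h => h.disjoint.symm
  set g := f - (bs.minCoef f A : 𝕜) • bs.ind B
  have hPBg : bs.proj B g = bs.proj B f - (bs.minCoef f A : 𝕜) • bs.ind B := by
    rw [proj_sub, proj_smul, proj_ind, inter_self]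
  have hfg : f - bs.proj B f = g - bs.proj B g := by rw [hPBg]; simp only [g]; abel
  have hproj := (hag.isTruncationBoundedQ hp hC.le).Q_proj_sub_minCoef_smul_ind_le hp hA hdisj
    hcard
  calc bs.Q (f - bs.proj A f) ≤ κ * bs.Q (g - bs.proj B g) := by
        rw [← hfg]; exact hag.Q_le hp hC.le hA hcard.le
    _ ≤ κ * (bs.Q g + 8 * binaryConst p * K * bs.Q g) := by
        gcongr
        rw [hPBg]
        exact (bs.Q_sub_le _ _).trans (add_le_add_right hproj _)
    _ = κ * (1 + 8 * binaryConst p * K) * bs.Q g := by ring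

section Separated

variable {C : ℝ} (hp : 0 < p) (hC : 0 ≤ C) (hv : bs.IsSeparatedURGPCCWith C)
include hp hC hv

lemma IsSeparatedURGPCCWith.Q_le {u : X} {T S : Finset ℕ} {θ : ℝ}
    (hin : ∀ n ∈ T, θ ≤ ‖bs.coord n u‖) (hout : ∀ m ∉ T, ‖bs.coord m u‖ ≤ θ)
    (hθ : ∃ n ∈ T, ‖bs.coord n u‖ = θ) (hcard : S.card = T.card)
    (hsep : FinsetBefore T S ∨ FinsetBefore S T) :
    bs.Q (u - bs.proj T u) ≤ C ^ p * bs.Q (u - (θ : 𝕜) • bs.ind S) := by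
  have h := hv u T S (fun n hn m hm => (hout m hm).trans (hin n hn)) hcard hsep
  rw [bs.minCoef_eq_of_forall_le hin hθ] at h
  exact (bs.N_le_iff_Q_le hp hC _ _).1 h

/-- If `y = P_T y` has all coefficients on `T` of modulus at least `θ`, with equality
somewhere, then `T` is a greedy set of `y + θ 𝟙_S` at level `θ`. -/
lemma IsSeparatedURGPCCWith.Q_smul_ind_le {y : X} {T S : Finset ℕ} {θ : ℝ} (hθ0 : 0 ≤ θ)
    (hy : bs.proj T y = y) (hin : ∀ n ∈ T, θ ≤ ‖bs.coord n y‖)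
    (hθ : ∃ n ∈ T, ‖bs.coord n y‖ = θ) (hcard : S.card = T.card)
    (hsep : FinsetBefore T S ∨ FinsetBefore S T) :
    bs.Q ((θ : 𝕜) • bs.ind S) ≤ C ^ p * bs.Q y := by
  have hST : Disjoint S T := hsep.elim (fun h => h.disjoint.symm) FinsetBefore.disjoint
  have hyT : ∀ n ∉ T, bs.coord n y = 0 := fun n hn => by rw [← hy, coord_proj, if_neg hn]
  set u := y + (θ : 𝕜) • bs.ind S
  have hcu : ∀ n, bs.coord n u = bs.coord n y + if n ∈ S then (θ : 𝕜) else 0 := fun n => by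
    simp [u, coord_ind]
  have hcuT : ∀ n ∈ T, bs.coord n u = bs.coord n y := fun n hn => by
    rw [hcu, if_neg (disjoint_right.1 hST hn), add_zero]
  have hout : ∀ m ∉ T, ‖bs.coord m u‖ ≤ θ := fun m hm => by
    rw [hcu, hyT m hm, zero_add]
    split_ifs <;> simp [abs_of_nonneg hθ0, hθ0]
  have h := hv.Q_le hp hC (u := u) (fun n hn => hcuT n hn ▸ hin n hn) hout
    (let ⟨n, hn, hyn⟩ := hθ; ⟨n, hn, hcuT n hn ▸ hyn⟩) hcard hsep
  have hPT : bs.proj T u = y := by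
    rw [proj_add, hy, proj_smul, proj_ind, disjoint_iff_inter_eq_empty.1 hST.symm,
      ind_empty, smul_zero, add_zero]
  rwa [hPT, add_sub_cancel_left, add_sub_cancel_right] at h

lemma IsSeparatedURGPCCWith.isSeparatedDemocraticQ : bs.IsSeparatedDemocraticQ (C ^ p) := by
  intro G F hGF hcard
  rcases F.eq_empty_or_nonempty with rfl | ⟨n, hn⟩
  · rw [card_empty, eq_comm, card_eq_zero] at hcard
    simp [hcard, bs.Q_zero hp]
  · simpa using hv.Q_smul_ind_le hp hC (y := bs.ind F) zero_le_one
      (by rw [proj_ind, inter_self]) (fun m hm => by simp [coord_ind, hm])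
      ⟨n, hn, by simp [coord_ind, hn]⟩ hcard.symm (Or.inr hGF)

lemma IsSeparatedURGPCCWith.Q_minCoef_smul_ind_le_Q_smul_proj_sub {g : X} {A b S : Finset ℕ}
    {c : ℝ} (hc : 1 ≤ c) (hAb : Disjoint A b) (hb : b.Nonempty)
    (hcard : S.card = (A ∪ b).card)
    (hsep : FinsetBefore (A ∪ b) S ∨ FinsetBefore S (A ∪ b)) :
    bs.Q ((bs.minCoef g A : 𝕜) • bs.ind S)
      ≤ C ^ p * bs.Q ((c : 𝕜) • bs.proj A g - (bs.minCoef g A : 𝕜) • bs.ind b) := by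
  set α := bs.minCoef g A
  have hα : 0 ≤ α := bs.minCoef_nonneg g A
  have hcoord : ∀ n, bs.coord n ((c : 𝕜) • bs.proj A g - (α : 𝕜) • bs.ind b)
      = (c : 𝕜) * (if n ∈ A then bs.coord n g else 0)
        - (α : 𝕜) * (if n ∈ b then 1 else 0) :=
    fun n => by simp [coord_proj, coord_ind]
  have hb' :
      ∀ n ∈ b, ‖bs.coord n ((c : 𝕜) • bs.proj A g - (α : 𝕜) • bs.ind b)‖ = α :=
    fun n hn => by simp [hcoord, hn, disjoint_right.1 hAb hn, abs_of_nonneg hα]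
  refine hv.Q_smul_ind_le hp hC hα ?_ (fun n hn => ?_) (let ⟨n, hn⟩ := hb;
    ⟨n, mem_union_right _ hn, hb' n hn⟩) hcard hsep
  · rw [proj_sub, proj_smul, proj_smul, proj_proj, proj_ind,
      inter_eq_right.2 subset_union_left,
      inter_eq_right.2 subset_union_right]
  · rcases mem_union.1 hn with hnA | hnb
    · rw [hcoord, if_pos hnA, if_neg (disjoint_left.1 hAb hnA), mul_zero, sub_zero,
        norm_mul, RCLike.norm_ofReal, abs_of_nonneg (by linarith)]
      exact (bs.minCoef_le hnA).trans (le_mul_of_one_le_left (norm_nonneg _) hc)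
    · exact (hb' n hnb).ge

lemma IsSeparatedURGPCCWith.Q_minCoef_smul_ind_le_add {g : X} {A b₁ b₂ S : Finset ℕ}
    (hAb : Disjoint A (b₁ ∪ b₂)) (hb : Disjoint b₁ b₂) (hb₁ : b₁.Nonempty)
    (hcard : S.card = (A ∪ (b₁ ∪ b₂)).card)
    (hsep : FinsetBefore (A ∪ (b₁ ∪ b₂)) S ∨ FinsetBefore S (A ∪ (b₁ ∪ b₂))) :
    bs.Q ((bs.minCoef g A : 𝕜) • bs.ind S)
      ≤ C ^ p * (bs.Q (bs.proj A g - (bs.minCoef g A : 𝕜) • bs.ind b₁)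
        + bs.Q (bs.proj A g - (bs.minCoef g A : 𝕜) • bs.ind b₂)) := by
  have h := hv.Q_minCoef_smul_ind_le_Q_smul_proj_sub hp hC (g := g) (c := 2) one_le_two hAb
    (hb₁.mono subset_union_left) hcard hsep
  rw [ind_union _ hb, smul_add, RCLike.ofReal_ofNat, two_smul] at h
  refine h.trans (mul_le_mul_of_nonneg_left (le_of_eq_of_le ?_ (bs.Q_add_le _ _))
    (Real.rpow_nonneg hC p))
  congr 1
  abel

/-- `A ∪ D` is a greedy set, at the level `α` of `A`, of the vector obtained from `g` by
setting its coordinates on `D` to `α` and replacing those on `S` by the ones of `y`. -/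
lemma IsSeparatedURGPCCWith.Q_sub_proj_add_le {g : X} {A D S : Finset ℕ}
    (hA : bs.IsGreedySet g A) (hAne : A.Nonempty) {y : X} (hy : bs.proj S y = y)
    (hyS : ∀ n ∈ S, ‖bs.coord n y‖ ≤ bs.minCoef g A) (hAD : Disjoint A D)
    (hcard : S.card = (A ∪ D).card)
    (hsep : FinsetBefore (A ∪ D) S ∨ FinsetBefore S (A ∪ D)) :
    bs.Q (g - bs.proj A g + y)
      ≤ C ^ p * bs.Q (g - bs.proj (D ∪ S) g + (bs.minCoef g A : 𝕜) • bs.ind D + y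
          - (bs.minCoef g A : 𝕜) • bs.ind S) + bs.Q (bs.proj (D ∪ S) g) := by
  set α := bs.minCoef g A
  have hα : 0 ≤ α := bs.minCoef_nonneg g A
  have hADS : Disjoint (A ∪ D) S := hsep.elim FinsetBefore.disjoint fun h => h.disjoint.symm
  have hAS : A ∩ S = ∅ := disjoint_iff_inter_eq_empty.1
    (disjoint_of_subset_left subset_union_left hADS)
  have hDS : D ∩ S = ∅ := disjoint_iff_inter_eq_empty.1
    (disjoint_of_subset_left subset_union_right hADS)
  have hAD' : A ∩ D = ∅ := disjoint_iff_inter_eq_empty.1 hAD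
  have hyS' : ∀ n ∉ S, bs.coord n y = 0 := fun n hn => by rw [← hy, coord_proj, if_neg hn]
  set u := g - bs.proj (D ∪ S) g + (α : 𝕜) • bs.ind D + y
  have hcu : ∀ n, bs.coord n u = (if n ∈ D ∪ S then 0 else bs.coord n g)
      + (α : 𝕜) * (if n ∈ D then 1 else 0) + bs.coord n y := fun n => by
    simp [u, coord_sub_proj, coord_ind]
  have hcuA : ∀ n ∈ A, bs.coord n u = bs.coord n g := fun n hn => by
    have hnD : n ∉ D := disjoint_left.1 hAD hn
    have hnS : n ∉ S := disjoint_left.1 hADS (mem_union_left _ hn)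
    simp [hcu, hnD, hnS, hyS' n hnS]
  have hin : ∀ n ∈ A ∪ D, α ≤ ‖bs.coord n u‖ := fun n hn => by
    rcases mem_union.1 hn with hnA | hnD
    · rw [hcuA n hnA]; exact bs.minCoef_le hnA
    · have hnS : n ∉ S := disjoint_left.1 hADS (mem_union_right _ hnD)
      simp [hcu, hnD, hyS' n hnS, abs_of_nonneg hα]
  have hout : ∀ m ∉ A ∪ D, ‖bs.coord m u‖ ≤ α := fun m hm => by
    rw [mem_union, not_or] at hm
    by_cases hmS : m ∈ S
    · simpa [hcu, hmS, hm.2] using hyS m hmS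
    · simpa [hcu, hmS, hm.2, hyS' m hmS] using hA.norm_coord_le_minCoef hAne hm.1
  have hθ : ∃ n ∈ A ∪ D, ‖bs.coord n u‖ = α :=
    let ⟨n, hn, hgn⟩ := bs.exists_norm_coord_eq_minCoef (f := g) hAne
    ⟨n, mem_union_left _ hn, (hcuA n hn).symm ▸ hgn⟩
  have key := hv.Q_le hp hC hin hout hθ hcard hsep
  have hPy : ∀ T, bs.proj T y = bs.proj (T ∩ S) y := fun T => by rw [← proj_proj, hy]
  have hPu : bs.proj (A ∪ D) u = bs.proj A g + (α : 𝕜) • bs.ind D := by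
    rw [proj_union _ hAD]
    simp only [u, proj_add, proj_sub, proj_smul, proj_proj, proj_ind, hPy A, hPy D,
      inter_union_distrib_left, hAD', hAS, hDS, inter_self,
      inter_eq_left.2 (subset_union_left : D ⊆ D ∪ S), union_empty,
      proj_empty, ind_empty, smul_zero]
    abel
  have hsplit : g - bs.proj A g + y = (u - bs.proj (A ∪ D) u) + bs.proj (D ∪ S) g := by
    rw [hPu]; simp only [u]; abel
  rw [hsplit]
  exact (bs.Q_add_le _ _).trans (by gcongr)

lemma IsSeparatedURGPCCWith.Q_sub_proj_add_minCoef_smul_ind_le {g : X} {A b : Finset ℕ}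
    (hA : bs.IsGreedySet g A) (hAne : A.Nonempty) (hAb : FinsetBefore A b)
    (hcard : b.card = A.card) :
    bs.Q (g - bs.proj A g + (bs.minCoef g A : 𝕜) • bs.ind b)
      ≤ C ^ p * bs.Q (g - bs.proj b g) + bs.Q (bs.proj b g) := by
  have hα := bs.minCoef_nonneg g A
  have h := hv.Q_sub_proj_add_le hp hC hA hAne (D := ∅)
    (y := (bs.minCoef g A : 𝕜) • bs.ind b) (by rw [proj_smul, proj_ind, inter_self])
    (fun n hn => by simp [coord_ind, hn, abs_of_nonneg hα]) (disjoint_empty_right _)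
    (by rwa [union_empty]) (by rw [union_empty]; exact Or.inl hAb)
  rwa [empty_union, ind_empty, smul_zero, add_zero, add_sub_cancel_right] at h

lemma IsSeparatedURGPCCWith.Q_proj_sub_minCoef_smul_ind_le {g : X} {A b : Finset ℕ}
    (hA : bs.IsGreedySet g A) (hAne : A.Nonempty) (hAb : FinsetBefore A b)
    (hcard : b.card = A.card) :
    bs.Q (bs.proj A g - (bs.minCoef g A : 𝕜) • bs.ind b)
      ≤ (1 + C ^ p) * (bs.Q g + bs.Q (bs.proj b g)) := by
  have h := hv.Q_sub_proj_add_minCoef_smul_ind_le hp hC hA hAne hAb hcard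
  have hsplit : bs.proj A g - (bs.minCoef g A : 𝕜) • bs.ind b
      = g - (g - bs.proj A g + (bs.minCoef g A : 𝕜) • bs.ind b) := by abel
  rw [hsplit]
  nlinarith [bs.Q_sub_le g (g - bs.proj A g + (bs.minCoef g A : 𝕜) • bs.ind b),
    bs.Q_sub_le g (bs.proj b g), Real.rpow_nonneg hC p]

lemma IsSeparatedURGPCCWith.Q_sub_proj_le {g : X} {A W B : Finset ℕ}
    (hA : bs.IsGreedySet g A) (hAne : A.Nonempty) (hAW : Disjoint A W)
    (hcard : B.card = (A ∪ W).card) (hsep : FinsetBefore (A ∪ W) B) :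
    bs.Q (g - bs.proj A g)
      ≤ C ^ p * (bs.Q g + bs.Q (bs.proj (W ∪ B) g) + bs.Q ((bs.minCoef g A : 𝕜) • bs.ind W)
          + bs.Q ((bs.minCoef g A : 𝕜) • bs.ind B)) + bs.Q (bs.proj (W ∪ B) g) := by
  have h := hv.Q_sub_proj_add_le hp hC hA hAne (y := 0) (by simp [proj])
    (fun _ _ => by rw [map_zero, norm_zero]; exact bs.minCoef_nonneg g A) hAW hcard
    (Or.inl hsep)
  rw [add_zero, add_zero] at h
  refine h.trans (add_le_add_left (mul_le_mul_of_nonneg_left ?_ (Real.rpow_nonneg hC p)) _)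
  linarith [bs.Q_sub_le (g - bs.proj (W ∪ B) g + (bs.minCoef g A : 𝕜) • bs.ind W)
    ((bs.minCoef g A : 𝕜) • bs.ind B),
    bs.Q_add_le (g - bs.proj (W ∪ B) g) ((bs.minCoef g A : 𝕜) • bs.ind W),
    bs.Q_sub_le g (bs.proj (W ∪ B) g)]

/- Far out, where the coordinates of `g` are negligible, the level `α` of `A` is
transported to blocks `b₁, b₂` of size `|A|`, then to blocks `W` and `B` of sizes `2|A|`
and `3|A|` through the greedy sets `A ∪ b₁` and `A ∪ b₁ ∪ b₂` of `P_A g - α 𝟙_{b₁}` and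
`2 P_A g - α 𝟙_{b₁ ∪ b₂}`, and finally back to `g - P_A g` through the greedy set
`A ∪ W`. -/
lemma IsSeparatedURGPCCWith.isQuasiGreedyQ :
    bs.IsQuasiGreedyQ (C ^ p * (1 + 3 * C ^ p * (1 + C ^ p))) := by
  intro g A hA
  set κ := C ^ p
  have hκ : 0 ≤ κ := Real.rpow_nonneg hC p
  have hQg := bs.Q_nonneg g
  rcases A.eq_empty_or_nonempty with rfl | hAne
  · have h := hv g ∅ ∅ (fun n hn => absurd hn (notMem_empty n)) rfl
      (Or.inl fun a ha => absurd ha (notMem_empty a))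
    simp only [proj_empty, ind_empty, smul_zero, sub_zero] at h ⊢
    have := (bs.N_le_iff_Q_le hp hC _ _).1 h
    nlinarith [mul_nonneg (mul_nonneg hκ hκ) hQg,
      mul_nonneg (mul_nonneg hκ hκ) (mul_nonneg hκ hQg)]
  set k := A.card
  set α := bs.minCoef g A
  have hk : 0 < k := card_pos.2 hAne
  refine le_of_forall_pos_le_add_mul (c := κ * (1 + 3 * κ * (1 + κ)) + 1) fun δ hδ => ?_
  obtain ⟨M, hAM, hN⟩ := bs.exists_Q_proj_le hp g A (5 * k) hδ
  have hbefore : ∀ c d, M ≤ c → FinsetBefore A (Ico c d) := fun c d hc =>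
    finsetBefore_Ico fun a ha => (hAM a ha).trans_le hc
  have hjunk : ∀ c d, M ≤ c → d ≤ c + 5 * k → bs.Q (bs.proj (Ico c d) g) ≤ δ :=
    fun c d hc hd => hN _ (by simp; omega) fun m hm => hc.trans (mem_Ico.1 hm).1
  have hblock : ∀ c, M ≤ c →
      bs.Q (bs.proj A g - (α : 𝕜) • bs.ind (Ico c (c + k))) ≤ (1 + κ) * (bs.Q g + δ) :=
    fun c hc => (hv.Q_proj_sub_minCoef_smul_ind_le hp hC hA hAne (hbefore c _ hc)
      (by simp [k])).trans (by gcongr; exact hjunk c _ hc (by omega))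
  have hAb₁ : Disjoint A (Ico M (M + k)) := (hbefore _ _ le_rfl).disjoint
  have hW : bs.Q ((α : 𝕜) • bs.ind (Ico (M + 2 * k) (M + 4 * k)))
      ≤ κ * ((1 + κ) * (bs.Q g + δ)) := by
    have h := hv.Q_minCoef_smul_ind_le_Q_smul_proj_sub hp hC (g := g) (c := 1) le_rfl hAb₁
      (nonempty_Ico.2 (by omega)) (S := Ico (M + 2 * k) (M + 4 * k))
      (by rw [card_union_of_disjoint hAb₁]; simp; omega)
      (Or.inl ((hbefore _ _ (by omega)).union_left (finsetBefore_Ico_Ico (by omega))))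
    rw [RCLike.ofReal_one, one_smul] at h
    exact h.trans (by gcongr; exact hblock M le_rfl)
  have hB : bs.Q ((α : 𝕜) • bs.ind (Ico (M + 4 * k) (M + 7 * k)))
      ≤ κ * (2 * ((1 + κ) * (bs.Q g + δ))) := by
    have hb := Ico_union_Ico_eq_Ico (a := M) (b := M + k) (c := M + k + k) (by omega) (by omega)
    have hAb : Disjoint A (Ico M (M + k) ∪ Ico (M + k) (M + k + k)) :=
      hb ▸ (hbefore _ _ le_rfl).disjoint
    refine (hv.Q_minCoef_smul_ind_le_add hp hC hAb (finsetBefore_Ico_Ico le_rfl).disjoint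
      (nonempty_Ico.2 (by omega)) ?_ ?_).trans ?_
    · rw [card_union_of_disjoint hAb, hb]; simp; omega
    · exact Or.inl (hb ▸ (hbefore _ _ (by omega)).union_left (finsetBefore_Ico_Ico (by omega)))
    · gcongr
      linarith [hblock M le_rfl, hblock (M + k) (by omega)]
  have hr := hv.Q_sub_proj_le hp hC hA hAne
    (hbefore (M + 2 * k) (M + 4 * k) (by omega)).disjoint (B := Ico (M + 4 * k) (M + 7 * k))
    (by rw [card_union_of_disjoint (hbefore _ _ (by omega)).disjoint]; simp; omega)
    ((hbefore _ _ (by omega)).union_left (finsetBefore_Ico_Ico le_rfl))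
  rw [Ico_union_Ico_eq_Ico (by omega) (by omega)] at hr
  have hj := hjunk (M + 2 * k) (M + 7 * k) (by omega) (by omega)
  have hsum : bs.Q g + bs.Q (bs.proj (Ico (M + 2 * k) (M + 7 * k)) g)
      + bs.Q ((α : 𝕜) • bs.ind (Ico (M + 2 * k) (M + 4 * k)))
      + bs.Q ((α : 𝕜) • bs.ind (Ico (M + 4 * k) (M + 7 * k)))
      ≤ (1 + 3 * κ * (1 + κ)) * (bs.Q g + δ) := by
    linarith
  linarith [mul_le_mul_of_nonneg_left hsum hκ]

lemma IsSeparatedURGPCCWith.Q_minCoef_smul_ind_le {g : X} {A b : Finset ℕ}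
    (hA : bs.IsGreedySet g A) (hAb : FinsetBefore A b) (hcard : b.card = A.card) :
    bs.Q ((bs.minCoef g A : 𝕜) • bs.ind b)
      ≤ (C ^ p + C ^ p * (1 + 3 * C ^ p * (1 + C ^ p))) * bs.Q g
        + (C ^ p + 1) * bs.Q (bs.proj b g) := by
  have hκ : 0 ≤ C ^ p := Real.rpow_nonneg hC p
  have hQg := bs.Q_nonneg g
  have hQb := bs.Q_nonneg (bs.proj b g)
  rcases A.eq_empty_or_nonempty with rfl | hAne
  · rw [card_empty, card_eq_zero] at hcard
    subst hcard
    simp only [ind_empty, smul_zero, bs.Q_zero hp]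
    positivity
  have hstep := hv.Q_sub_proj_add_minCoef_smul_ind_le hp hC hA hAne hAb hcard
  have hqg := hv.isQuasiGreedyQ hp hC g A hA
  have hsplit : (bs.minCoef g A : 𝕜) • bs.ind b
      = (g - bs.proj A g + (bs.minCoef g A : 𝕜) • bs.ind b) - (g - bs.proj A g) := by abel
  rw [hsplit]
  nlinarith [bs.Q_sub_le (g - bs.proj A g + (bs.minCoef g A : 𝕜) • bs.ind b)
    (g - bs.proj A g), bs.Q_sub_le g (bs.proj b g)]

lemma IsSeparatedURGPCCWith.isTruncationBoundedQ :
    bs.IsTruncationBoundedQ (C ^ p * (C ^ p * (1 + 3 * C ^ p * (1 + C ^ p)))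
      * (C ^ p + C ^ p * (1 + 3 * C ^ p * (1 + C ^ p)))) :=
  have hκ : 0 ≤ C ^ p := Real.rpow_nonneg hC p
  IsTruncationBoundedQ.of_far hp (by positivity) hκ (by positivity)
    (hv.isQuasiGreedyQ hp hC) (hv.isSeparatedDemocraticQ hp hC) fun _ _ _ hA hAb hcard =>
      hv.Q_minCoef_smul_ind_le hp hC hA hAb hcard

end Separated

lemma IsSeparatedURGPCCWith.exists_isAlmostGreedyWith (hp : 0 < p) {C : ℝ} (hC : 0 < C)
    (hv : bs.IsSeparatedURGPCCWith C) : ∃ C' > 0, bs.IsAlmostGreedyWith C' := by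
  have hκ : 0 < C ^ p := Real.rpow_pos_of_pos hC p
  have hbin := binaryConst_nonneg hp
  exact ⟨_, Real.rpow_pos_of_pos (add_pos_of_pos_of_nonneg (by positivity)
      (mul_nonneg (mul_nonneg zero_le_four hbin) (by positivity))) _,
    (hv.isQuasiGreedyQ hp hC.le).isAlmostGreedyWith hp (by positivity) (by positivity)
      (hv.isTruncationBoundedQ hp hC.le)⟩

end PBasis

theorem almost_greedy_iff_separated_polynomials_general {𝕜 : Type*} [RCLike 𝕜] {X : Type*}
    [AddCommGroup X] [Module 𝕜 X] {p : ℝ} (hp : 0 < p) (bs : PBasis 𝕜 X p) :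
    (∃ C : ℝ, 0 < C ∧ bs.IsAlmostGreedyWith C) ↔
      (∃ C : ℝ, 0 < C ∧ ∀ (f : X) (A B : Finset ℕ),
        bs.IsGreedySet f A → B.card = A.card →
        (PBasis.FinsetBefore A B ∨ PBasis.FinsetBefore B A) →
        bs.N (f - bs.proj A f) ≤
          C * bs.N (f - ((bs.minCoef f A : ℝ) : 𝕜) • bs.ind B)) :=
  ⟨fun ⟨_, hC, hag⟩ => hag.exists_isSeparatedURGPCCWith hp hC,
    fun ⟨_, hC, hv⟩ => PBasis.IsSeparatedURGPCCWith.exists_isAlmostGreedyWith hp hC hv⟩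

/-- (Theorem 1.7, i) ⟺ v).) A basis of a `p`-Banach space is almost greedy
iff there is `C > 0` with `‖f − P_A(f)‖ ≤ C‖f − (min_{n∈A}|x_n^*(f)|)·𝟙_B‖` for all `f`,
greedy sets `A`, and sets `B` with `|B| = |A|` and `A < B` or `B < A`. -/
theorem almost_greedy_iff_separated_polynomials {𝕜 : Type*} [RCLike 𝕜] {X : Type*}
    [AddCommGroup X] [Module 𝕜 X] {p : ℝ} (hp : 0 < p) (hp1 : p ≤ 1) (bs : PBasis 𝕜 X p) :
    (∃ C : ℝ, 0 < C ∧ bs.IsAlmostGreedyWith C) ↔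
      (∃ C : ℝ, 0 < C ∧ ∀ (f : X) (A B : Finset ℕ),
        bs.IsGreedySet f A → B.card = A.card →
        (PBasis.FinsetBefore A B ∨ PBasis.FinsetBefore B A) →
        bs.N (f - bs.proj A f) ≤
          C * bs.N (f - ((bs.minCoef f A : ℝ) : 𝕜) • bs.ind B)) :=
  almost_greedy_iff_separated_polynomials_general hp bs
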